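/- arXiv:math/0509696 — 3 statements merged into one kernel-verified Lean document; each statement's English description precedes it below -/
import Mathlib

section
/- Let M ≥ 2 and let r_1, …, r_M be real numbers. Define weights w_j = exp(-n·r_j) / ∑_{k=1}^M exp(-n·r_k) for a fixed n > 0. Then the weighted average satisfies ∑_{j=1}^M w_j r_j ≤ min_{j=1,…,M} r_j + (log M)/n. -/
theorem exp_weights_min (M : ℕ) (hM : 2 ≤ M) (r : Fin M → ℝ) (n : ℝ) (hn : 0 < n)
    (w : Fin M → ℝ)
    (hw : ∀ j, w j = Real.exp (-n * r j) / ∑ k, Real.exp (-n * r k)) :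
    ∑ j, w j * r j ≤
      Finset.univ.inf' ⟨⟨0, by omega⟩, Finset.mem_univ _⟩ r + Real.log M / n := by
  have hMnz : (Finset.univ : Finset (Fin M)).Nonempty := ⟨⟨0, by omega⟩, Finset.mem_univ _⟩
  set S : ℝ := ∑ k, Real.exp (-n * r k) with hS
  have hSpos : 0 < S := Finset.sum_pos (fun k _ => Real.exp_pos _) hMnz
  have hwpos : ∀ j, 0 < w j := fun j => by
    rw [hw j]; exact div_pos (Real.exp_pos _) hSpos
  have hwsum : ∑ j, w j = 1 := by
    simp only [hw]
    rw [← Finset.sum_div, ← hS, div_self hSpos.ne']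
  set m : ℝ := Finset.univ.inf' hMnz r with hm
  -- express r j in terms of log w j and log S
  have hr : ∀ j, r j = (-Real.log (w j) - Real.log S) / n := by
    intro j
    have : Real.log (w j) = -n * r j - Real.log S := by
      rw [hw j, Real.log_div (Real.exp_pos _).ne' hSpos.ne', Real.log_exp]
    rw [this]; field_simp; ring
  -- log S ≥ -n * m
  have hlogS : -n * m ≤ Real.log S := by
    obtain ⟨j0, _, hj0⟩ := Finset.exists_mem_eq_inf' hMnz r
    calc -n * m = Real.log (Real.exp (-n * r j0)) := by rw [Real.log_exp, hm, hj0]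
    _ ≤ Real.log S := Real.log_le_log (Real.exp_pos _) (Finset.single_le_sum (f := fun k => Real.exp (-n * r k)) (fun k _ => (Real.exp_pos _).le) (Finset.mem_univ j0))
  -- entropy bound: ∑ w j * (- log (w j)) ≤ log M
  have hent : ∑ j, w j * (-Real.log (w j)) ≤ Real.log M := by
    have hgm := Real.geom_mean_le_arith_mean_weighted Finset.univ w (fun j => (w j)⁻¹)
      (fun j _ => (hwpos j).le) hwsum (fun j _ => (inv_pos.2 (hwpos j)).le)
    have hsum : ∑ j, w j * (w j)⁻¹ = (M : ℝ) := by
      rw [Finset.sum_congr rfl (fun j _ => mul_inv_cancel₀ (hwpos j).ne')]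
      simp
    have hprodpos : 0 < ∏ j, (w j)⁻¹ ^ (w j) :=
      Finset.prod_pos fun j _ => Real.rpow_pos_of_pos (inv_pos.2 (hwpos j)) _
    have := Real.log_le_log hprodpos (hgm.trans_eq hsum)
    rw [Real.log_prod (fun j _ => (Real.rpow_pos_of_pos (inv_pos.2 (hwpos j)) _).ne')] at this
    calc ∑ j, w j * (-Real.log (w j)) = ∑ j, Real.log ((w j)⁻¹ ^ (w j)) := by
          refine Finset.sum_congr rfl fun j _ => ?_
          rw [Real.log_rpow (inv_pos.2 (hwpos j)), Real.log_inv]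
    _ ≤ Real.log M := this
  -- combine
  have key : ∑ j, w j * r j = (∑ j, w j * (-Real.log (w j)) - Real.log S) / n := by
    have h1 : ∀ j, w j * r j = (w j * (-Real.log (w j)) - w j * Real.log S) / n := fun j => by
      rw [hr j]; field_simp
    rw [Finset.sum_congr rfl fun j _ => h1 j, ← Finset.sum_div, Finset.sum_sub_distrib,
      ← Finset.sum_mul, hwsum, one_mul]
  rw [key]
  have : (∑ j, w j * (-Real.log (w j)) - Real.log S) / n ≤ (Real.log M + n * m) / n := by
    apply div_le_div_of_nonneg_right ?_ hn.le |>.trans_eq rfl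
    have := hlogS
    linarith [hent]
  calc _ ≤ (Real.log M + n * m) / n := this
  _ = m + Real.log M / n := by field_simp; ring
end

section
/- Let f_1, …, f_M : X → {-1,1} be prediction rules and let (X_1,Y_1),…,(X_n,Y_n) be points in X × {-1,1}. Define the empirical hinge risk A_n(f) = (1/n)∑_{i=1}^n max(0, 1 - Y_i f(X_i)) and the aggregate f̃ = ∑_{j=1}^M w_j f_j with exponential weights w_j = exp(-n A_n(f_j)) / ∑_{k=1}^M exp(-n A_n(f_k)). Then A_n(f̃) ≤ min_{j=1,…,M} A_n(f_j) + (log M)/n. -/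
lemma aew_te_le (t : ℝ) (ht : 0 ≤ t) : t * Real.exp (-t) ≤ Real.exp (-1) := by
  have h := Real.add_one_le_exp (t - 1)
  have h2 : t ≤ Real.exp t * Real.exp (-1) := by
    rw [← Real.exp_add]
    calc t = (t - 1) + 1 := by ring
    _ ≤ Real.exp (t - 1) := h
    _ = Real.exp (t + -1) := by ring_nf
  calc t * Real.exp (-t) ≤ (Real.exp t * Real.exp (-1)) * Real.exp (-t) :=
        mul_le_mul_of_nonneg_right h2 (Real.exp_pos _).le
    _ = Real.exp (-1) * (Real.exp t * Real.exp (-t)) := by ring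
    _ = Real.exp (-1) := by rw [← Real.exp_add]; simp

lemma aew_key (N L b : ℝ) (hN : 0 < N) (hL : 0 ≤ L) (hb : 0 ≤ b) :
    Real.exp (-(N * b)) * (b - L) ≤ Real.exp (-(N * L)) * Real.exp (-1) / N := by
  rcases le_or_gt b L with h | h
  · have h1 : Real.exp (-(N * b)) * (b - L) ≤ 0 :=
      mul_nonpos_of_nonneg_of_nonpos (Real.exp_pos _).le (by linarith)
    exact h1.trans (by positivity)
  · have hbl : 0 < b - L := by linarith
    have h1 : N * (b - L) * Real.exp (-(N * (b - L))) ≤ Real.exp (-1) :=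
      aew_te_le _ (by positivity)
    have hexp : Real.exp (-(N * b)) = Real.exp (-(N * L)) * Real.exp (-(N * (b - L))) := by
      rw [← Real.exp_add]; ring_nf
    have h2 : Real.exp (-(N * (b - L))) * (b - L) ≤ Real.exp (-1) / N := by
      rw [le_div_iff₀ hN]
      calc Real.exp (-(N * (b - L))) * (b - L) * N
          = N * (b - L) * Real.exp (-(N * (b - L))) := by ring
        _ ≤ Real.exp (-1) := h1
    rw [hexp]
    calc Real.exp (-(N * L)) * Real.exp (-(N * (b - L))) * (b - L)
        = Real.exp (-(N * L)) * (Real.exp (-(N * (b - L))) * (b - L)) := by ring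
      _ ≤ Real.exp (-(N * L)) * (Real.exp (-1) / N) :=
          mul_le_mul_of_nonneg_left h2 (Real.exp_pos _).le
      _ = Real.exp (-(N * L)) * Real.exp (-1) / N := by ring

theorem aew_oracle {X : Type*} (M n : ℕ) (hM : 2 ≤ M) (hn : 1 ≤ n)
    (f : Fin M → X → ℝ) (hf : ∀ j x, f j x = 1 ∨ f j x = -1)
    (x : Fin n → X) (y : Fin n → ℝ) (hy : ∀ i, y i = 1 ∨ y i = -1)
    (A : (X → ℝ) → ℝ)
    (hA : ∀ g : X → ℝ, A g = (1 / (n : ℝ)) * ∑ i, max 0 (1 - y i * g (x i)))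
    (w : Fin M → ℝ)
    (hw : ∀ j, w j = Real.exp (-(n : ℝ) * A (f j)) / ∑ k, Real.exp (-(n : ℝ) * A (f k))) :
    A (fun p => ∑ j, w j * f j p) ≤
      Finset.univ.inf' ⟨⟨0, by omega⟩, Finset.mem_univ _⟩ (fun j => A (f j))
        + Real.log M / n := by
  have hn' : (0:ℝ) < (n:ℝ) := by exact_mod_cast Nat.lt_of_lt_of_le Nat.zero_lt_one hn
  have hM0 : (0:ℝ) < (M:ℝ) := by exact_mod_cast Nat.lt_of_lt_of_le Nat.zero_lt_two hM
  set N : ℝ := (n:ℝ) with hNdef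
  set a : Fin M → ℝ := fun j => A (f j) with hadef
  set S : ℝ := ∑ k, Real.exp (-N * a k) with hSdef
  have hne : (Finset.univ : Finset (Fin M)).Nonempty := ⟨⟨0, by omega⟩, Finset.mem_univ _⟩
  have hS : 0 < S := Finset.sum_pos (fun k _ => Real.exp_pos _) hne
  have hwnn : ∀ j, 0 ≤ w j := fun j => by rw [hw j]; positivity
  have hwsum : (∑ j, w j) = 1 := by
    rw [Finset.sum_congr rfl fun j _ => hw j, ← Finset.sum_div, ← hSdef, div_self hS.ne']
  -- pointwise facts
  have hyf : ∀ i j, y i * f j (x i) = 1 ∨ y i * f j (x i) = -1 := by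
    intro i j
    rcases hy i with h1 | h1 <;> rcases hf j (x i) with h2 | h2 <;> rw [h1, h2] <;> norm_num
  have hmax : ∀ i j, max 0 (1 - y i * f j (x i)) = 1 - y i * f j (x i) := by
    intro i j
    rcases hyf i j with h | h <;> rw [h] <;> norm_num
  -- Step 1 : linearity of the hinge risk at the aggregate
  have step1 : A (fun p => ∑ j, w j * f j p) = ∑ j, w j * a j := by
    have hpt : ∀ i, max 0 (1 - y i * ∑ j, w j * f j (x i))
        = ∑ j, w j * max 0 (1 - y i * f j (x i)) := by
      intro i
      have hle : y i * ∑ j, w j * f j (x i) ≤ 1 := by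
        calc y i * ∑ j, w j * f j (x i) = ∑ j, w j * (y i * f j (x i)) := by
              rw [Finset.mul_sum]; exact Finset.sum_congr rfl fun j _ => by ring
          _ ≤ ∑ j, w j * 1 := Finset.sum_le_sum fun j _ =>
              mul_le_mul_of_nonneg_left (by rcases hyf i j with h | h <;> rw [h] <;> norm_num)
                (hwnn j)
          _ = 1 := by simpa using hwsum
      have h1 : max 0 (1 - y i * ∑ j, w j * f j (x i))
          = 1 - y i * ∑ j, w j * f j (x i) := max_eq_right (by linarith)
      rw [h1]
      have h2 : (1:ℝ) - y i * ∑ j, w j * f j (x i)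
          = ∑ j, w j * (1 - y i * f j (x i)) := by
        have : ∀ j, w j * (1 - y i * f j (x i)) = w j - w j * (y i * f j (x i)) := fun j => by ring
        rw [Finset.sum_congr rfl fun j _ => this j, Finset.sum_sub_distrib, hwsum,
          Finset.mul_sum]
        congr 1
        exact Finset.sum_congr rfl fun j _ => by ring
      rw [h2]
      exact Finset.sum_congr rfl fun j _ => by rw [hmax i j]
    rw [hA, Finset.sum_congr rfl fun i _ => hpt i, Finset.sum_comm, Finset.mul_sum]
    refine Finset.sum_congr rfl fun j _ => ?_
    rw [hadef]
    simp only []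
    rw [hA, ← Finset.mul_sum]
    ring
  rw [step1]
  -- Step 2 : exponential weights inequality
  obtain ⟨j0, -, hj0⟩ := Finset.exists_mem_eq_inf' hne (fun j => A (f j))
  rw [hj0]
  have hmin : ∀ j, a j0 ≤ a j := fun j => by
    have h : Finset.univ.inf' hne (fun j => A (f j)) ≤ A (f j) :=
      Finset.inf'_le _ (Finset.mem_univ j)
    rw [hj0] at h; exact h
  set L : ℝ := Real.log M / N with hLdef
  have hlogM : Real.exp (-1) ≤ Real.log M := by
    have he2 : (2:ℝ) ≤ Real.exp 1 := by
      have := Real.add_one_le_exp 1; linarith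
    have h1 : Real.exp (-1) ≤ 1/2 := by
      rw [Real.exp_neg]
      rw [inv_le_comm₀ (Real.exp_pos 1) (by norm_num)]
      linarith
    have hsq : Real.exp (1/2) ≤ 2 := by
      nlinarith [Real.exp_one_lt_d9, Real.exp_pos (1/2), Real.exp_add (1/2) (1/2),
        Real.exp_pos 1]
    have h2 : (1/2 : ℝ) ≤ Real.log 2 := by
      rw [Real.le_log_iff_exp_le (by norm_num : (0:ℝ) < 2)]; exact hsq
    have h3 : Real.log 2 ≤ Real.log M := by
      apply Real.log_le_log (by norm_num)
      exact_mod_cast hM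
    linarith
  have hL0 : 0 ≤ L := div_nonneg (by
      apply Real.log_nonneg; exact_mod_cast Nat.one_le_of_lt (Nat.lt_of_lt_of_le Nat.one_lt_two hM)) hn'.le
  -- key summation bound
  have hsum : ∑ j, Real.exp (-N * a j) * (a j - (a j0 + L)) ≤ 0 := by
    have hterm : ∀ j, Real.exp (-N * a j) * (a j - (a j0 + L))
        = Real.exp (-N * a j0) * (Real.exp (-(N * (a j - a j0))) * ((a j - a j0) - L)) := by
      intro j
      have harg : (-N * a j) = (-N * a j0) + (-(N * (a j - a j0))) := by ring
      rw [harg, Real.exp_add]; ring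
    rw [Finset.sum_congr rfl fun j _ => hterm j, ← Finset.mul_sum]
    apply mul_nonpos_of_nonneg_of_nonpos (Real.exp_pos _).le
    set g : Fin M → ℝ := fun j => Real.exp (-(N * (a j - a j0))) * ((a j - a j0) - L) with hgdef
    have hg0 : g j0 = -L := by simp [hgdef]
    have hgle : ∀ j, g j ≤ Real.exp (-(N * L)) * Real.exp (-1) / N :=
      fun j => aew_key N L _ hn' hL0 (by linarith [hmin j])
    have hexpNL : Real.exp (-(N * L)) = (M:ℝ)⁻¹ := by
      have : N * L = Real.log M := by
        rw [hLdef]; field_simp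
      rw [this, Real.exp_neg, Real.exp_log hM0]
    have hcard : ∑ j ∈ Finset.univ.erase j0, g j ≤ Real.exp (-1) / N := by
      calc ∑ j ∈ Finset.univ.erase j0, g j
          ≤ ∑ _j ∈ Finset.univ.erase j0, Real.exp (-(N * L)) * Real.exp (-1) / N :=
            Finset.sum_le_sum fun j _ => hgle j
        _ = ((Finset.univ.erase j0).card : ℝ) * ((M:ℝ)⁻¹ * Real.exp (-1) / N) := by
            rw [Finset.sum_const, nsmul_eq_mul, hexpNL]
        _ ≤ (M:ℝ) * ((M:ℝ)⁻¹ * Real.exp (-1) / N) := by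
            apply mul_le_mul_of_nonneg_right _ (by positivity)
            have : (Finset.univ.erase j0).card ≤ M := by
              calc (Finset.univ.erase j0).card ≤ (Finset.univ : Finset (Fin M)).card :=
                    Finset.card_le_card (Finset.erase_subset _ _)
                _ = M := by simp
            exact_mod_cast this
        _ = Real.exp (-1) / N := by field_simp
    have hsplit : ∑ j, g j = g j0 + ∑ j ∈ Finset.univ.erase j0, g j :=
      (Finset.add_sum_erase _ g (Finset.mem_univ j0)).symm
    rw [hsplit, hg0]
    have hLe : Real.exp (-1) / N ≤ L := by
      rw [hLdef]
      exact (div_le_div_iff_of_pos_right hn').mpr hlogM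
    linarith [hcard]
  -- conclude
  have hexpand : ∑ j, w j * a j = (∑ j, Real.exp (-N * a j) * a j) / S := by
    rw [Finset.sum_div]
    exact Finset.sum_congr rfl fun j _ => by rw [hw j]; ring
  rw [hexpand, div_le_iff₀ hS]
  have : ∑ j, Real.exp (-N * a j) * (a j - (a j0 + L))
      = (∑ j, Real.exp (-N * a j) * a j) - (a j0 + L) * S := by
    rw [hSdef, Finset.mul_sum, ← Finset.sum_sub_distrib]
    exact Finset.sum_congr rfl fun j _ => by ring
  show ∑ j, Real.exp (-N * a j) * a j ≤ (a j0 + L) * S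
  linarith [hsum, this]
end

section
/- Let η : X → [0,1], f*(x) = sign(2η(x)-1), and P^X a probability measure on X. For any measurable function f : X → ℝ, the excess hinge risk dominates the excess misclassification risk: R(sign(f)) - R* ≤ A(f) - A*, where A(f) = E[(1 - Y f(X))_+], A* = inf over all measurable f of A(f) = A(f*), and R, R* are the misclassification risk and Bayes risk. -/
/-!
Everything happens pointwise in `x`. Write `e = η x`. The Bayes label `f* = sign (2e - 1)` has
misclassification risk `min e (1 - e)` and hinge risk `2 min e (1 - e)`, the minimum of the
piecewise linear conditional hinge risk. If `sign v` agrees with `f*`, the misclassification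
excess vanishes while the hinge excess is nonnegative. Otherwise `v` lies on the wrong side of `0`,
where the conditional hinge risk is at least its value `1` at `0`, so the hinge excess is at least
`1 - 2 min e (1 - e) = |2e - 1|`, which is exactly the misclassification excess. Integrating the
pointwise inequality gives the theorem.
-/

open MeasureTheory

noncomputable def signLabel (v : ℝ) : ℝ := if 0 ≤ v then 1 else -1

-- Conditional risks given `X = x`, with `e` standing for `η x = P(Y = 1 | X = x)`.
noncomputable def condMisclassRisk (e y : ℝ) : ℝ :=
  e * (if y = -1 then 1 else 0) + (1 - e) * (if y = 1 then 1 else 0)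

def condHingeRisk (e v : ℝ) : ℝ :=
  e * max 0 (1 - v) + (1 - e) * max 0 (1 + v)

lemma condMisclassRisk_signLabel (e v : ℝ) :
    condMisclassRisk e (signLabel v) = if 0 ≤ v then 1 - e else e := by
  unfold condMisclassRisk signLabel
  split_ifs <;> norm_num at *

lemma condHingeRisk_signLabel (e v : ℝ) :
    condHingeRisk e (signLabel v) = if 0 ≤ v then 2 * (1 - e) else 2 * e := by
  unfold condHingeRisk signLabel
  split_ifs <;> norm_num <;> ring

lemma abs_condMisclassRisk_le {e : ℝ} (h0 : 0 ≤ e) (h1 : e ≤ 1) (y : ℝ) :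
    |condMisclassRisk e y| ≤ 1 := by
  unfold condMisclassRisk
  rw [abs_le]
  split_ifs <;> constructor <;> linarith

lemma abs_condHingeRisk_signLabel_le {e : ℝ} (h0 : 0 ≤ e) (h1 : e ≤ 1) (v : ℝ) :
    |condHingeRisk e (signLabel v)| ≤ 2 := by
  rw [condHingeRisk_signLabel, abs_le]
  split_ifs <;> constructor <;> linarith

lemma condMisclassRisk_sub_le_condHingeRisk_sub {e : ℝ} (h0 : 0 ≤ e) (h1 : e ≤ 1) (v : ℝ) :
    condMisclassRisk e (signLabel v) - condMisclassRisk e (signLabel (2 * e - 1)) ≤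
      condHingeRisk e v - condHingeRisk e (signLabel (2 * e - 1)) := by
  rw [condMisclassRisk_signLabel, condMisclassRisk_signLabel, condHingeRisk_signLabel]
  unfold condHingeRisk
  rcases max_cases 0 (1 - v) with ⟨hm1, _⟩ | ⟨hm1, _⟩ <;>
  rcases max_cases 0 (1 + v) with ⟨hm2, _⟩ | ⟨hm2, _⟩ <;>
  rw [hm1, hm2] <;> split_ifs <;> nlinarith

lemma integral_sub_le_integral_sub {X : Type*} [MeasurableSpace X] {μ : Measure X}
    {a b c d : X → ℝ} (ha : Integrable a μ) (hb : Integrable b μ) (hc : Integrable c μ)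
    (hd : Integrable d μ) (h : ∀ x, a x - b x ≤ c x - d x) :
    ∫ x, a x ∂μ - ∫ x, b x ∂μ ≤ ∫ x, c x ∂μ - ∫ x, d x ∂μ := by
  rw [← integral_sub ha hb, ← integral_sub hc hd]
  exact integral_mono (ha.sub hb) (hc.sub hd) h

section Integrability

variable {X : Type*} [MeasurableSpace X] {μ : Measure X} [IsFiniteMeasure μ] {η : X → ℝ}

lemma measurable_signLabel_comp {g : X → ℝ} (hg : Measurable g) :
    Measurable fun x => signLabel (g x) :=
  Measurable.ite (measurableSet_le measurable_const hg) measurable_const measurable_const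

lemma integrable_condMisclassRisk_signLabel (hη : Measurable η)
    (hη01 : ∀ x, 0 ≤ η x ∧ η x ≤ 1) {g : X → ℝ} (hg : Measurable g) :
    Integrable (fun x => condMisclassRisk (η x) (signLabel (g x))) μ := by
  have hs := measurable_signLabel_comp hg
  refine Integrable.of_bound (C := 1) ?_ (.of_forall fun x =>
    abs_condMisclassRisk_le (hη01 x).1 (hη01 x).2 _)
  unfold condMisclassRisk
  exact (hη.mul (Measurable.ite (measurableSet_eq_fun hs measurable_const) measurable_const
    measurable_const)).add ((measurable_const.sub hη).mul (Measurable.ite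
    (measurableSet_eq_fun hs measurable_const) measurable_const measurable_const))
    |>.aestronglyMeasurable

lemma integrable_condHingeRisk_signLabel (hη : Measurable η)
    (hη01 : ∀ x, 0 ≤ η x ∧ η x ≤ 1) {g : X → ℝ} (hg : Measurable g) :
    Integrable (fun x => condHingeRisk (η x) (signLabel (g x))) μ := by
  have hs := measurable_signLabel_comp hg
  refine Integrable.of_bound (C := 2) ?_ (.of_forall fun x =>
    abs_condHingeRisk_signLabel_le (hη01 x).1 (hη01 x).2 _)
  unfold condHingeRisk
  fun_prop

end Integrability

/-- Zhang's inequality: the excess hinge risk dominates the excess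
misclassification risk. -/
theorem zhang_inequality {X : Type*} [MeasurableSpace X] (μ : Measure X)
    [IsProbabilityMeasure μ] (η : X → ℝ) (hη : Measurable η)
    (hη01 : ∀ x, 0 ≤ η x ∧ η x ≤ 1)
    (f : X → ℝ) (hf : Measurable f)
    (hint : Integrable (fun x => η x * max 0 (1 - f x)
        + (1 - η x) * max 0 (1 + f x)) μ)
    (fstar : X → ℝ) (hfstar : ∀ x, fstar x = if 0 ≤ 2 * η x - 1 then 1 else -1)
    (R : (X → ℝ) → ℝ)
    (hR : ∀ g : X → ℝ, R g = ∫ x, (η x * (if g x = -1 then 1 else 0)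
        + (1 - η x) * (if g x = 1 then 1 else 0)) ∂μ)
    (A : (X → ℝ) → ℝ)
    (hA : ∀ g : X → ℝ, A g = ∫ x, (η x * max 0 (1 - g x)
        + (1 - η x) * max 0 (1 + g x)) ∂μ) :
    R (fun x => if 0 ≤ f x then 1 else -1) - R fstar ≤ A f - A fstar := by
  obtain rfl : fstar = fun x => signLabel (2 * η x - 1) := funext hfstar
  have hbayes : Measurable fun x => 2 * η x - 1 := by fun_prop
  rw [hR, hR, hA, hA]
  exact integral_sub_le_integral_sub
    (integrable_condMisclassRisk_signLabel hη hη01 hf)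
    (integrable_condMisclassRisk_signLabel hη hη01 hbayes) hint
    (integrable_condHingeRisk_signLabel hη hη01 hbayes)
    fun x => condMisclassRisk_sub_le_condHingeRisk_sub (hη01 x).1 (hη01 x).2 (f x)
end
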